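/- Let K be a real number with 0 < K < 1, and let A be a strictly stochastic strand symmetric matrix with rows (a,b,c,d), (e,f,g,h), (h,g,f,e), (d,c,b,a), with det(A) = K, a + d + g + f > 1, b ≠ c, and f > g. Set λ = a+d, μ = f+g, α = f-g, α' = h-e, β = a-d, β' = c-b. Then (λ,μ) ∈ Θ, (α,β) ∈ Ω_{λ,μ}, and α', β' satisfy |αβ - K/(λ+μ-1)|/(1-μ) < |β'| < 1-λ and α' = (αβ - K/(λ+μ-1))/β'. -/

import Mathlib

/-!
Write `s = λ + μ - 1`. Using the row sums, `det A` factors as `s · (αβ - α'β')`, so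
`αβ - K/s = α'β'`, and positivity of the entries says exactly `|α| < μ`, `|β| < λ`, `|α'| < 1 - μ`,
`|β'| < 1 - λ`; this gives `Ω_{λ,μ}` and the bounds on `β'`. For `Θ`,
`r_K(s) / s = (λ - μ)² + 2(λμ - αβ) + 2((1 - λ)(1 - μ) + α'β')` exceeds `(λ - μ)²`; in particular
`r_K(s) > 0 = r_K(ν₀)`, and `r_K` is strictly increasing, so `ν₀ < s`.
-/

/-- The polynomial `r_K(z) = z³ + z - 2K`. -/
def rK (K z : ℝ) : ℝ := z ^ 3 + z - 2 * K

/-- The set `Θ` of pairs `(λ,μ) ∈ (0,1)²` with `ν₀ + 1 ≤ λ + μ < 2` and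
`|λ - μ| < min { 2 - λ - μ, √(r_K(λ+μ-1)/(λ+μ-1)) }`. -/
noncomputable def Theta (K ν : ℝ) : Set (ℝ × ℝ) :=
  {p | p.1 ∈ Set.Ioo (0 : ℝ) 1 ∧ p.2 ∈ Set.Ioo (0 : ℝ) 1 ∧
    ν + 1 ≤ p.1 + p.2 ∧ p.1 + p.2 < 2 ∧
    |p.1 - p.2| <
      min (2 - p.1 - p.2) (Real.sqrt (rK K (p.1 + p.2 - 1) / (p.1 + p.2 - 1)))}

/-- The set `Ω_{λ,μ}`. -/
noncomputable def OmegaLM (K lam mu : ℝ) : Set (ℝ × ℝ) :=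
  {p | 0 < p.1 ∧ p.1 < mu ∧ |p.2| < lam ∧
    |p.1 * p.2 - K / (lam + mu - 1)| < (1 - lam) * (1 - mu)}

lemma det_ssm (a b c d e f g h : ℝ) :
    (!![a, b, c, d; e, f, g, h; h, g, f, e; d, c, b, a]).det =
      ((a + d) * (f + g) - (b + c) * (e + h)) * ((a - d) * (f - g) - (b - c) * (e - h)) := by
  simp [Matrix.det_succ_row_zero, Fin.sum_univ_succ, Fin.succAbove]
  ring

lemma det_ssm_of_row_sum {a b c d e f g h : ℝ} (hsum1 : a + b + c + d = 1)
    (hsum2 : e + f + g + h = 1) :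
    (!![a, b, c, d; e, f, g, h; h, g, f, e; d, c, b, a]).det =
      (a + d + (f + g) - 1) * ((f - g) * (a - d) - (h - e) * (c - b)) := by
  rw [det_ssm]
  linear_combination
    (-(b + c) * hsum2 + (f + g - 1) * hsum1) * ((a - d) * (f - g) - (b - c) * (e - h))

lemma rK_strictMono (K : ℝ) : StrictMono (rK K) := fun x y hxy => by
  have : x ^ 3 < y ^ 3 := Odd.strictMono_pow (by decide) hxy
  simp only [rK]
  linarith

lemma abs_sub_lt_add {x y : ℝ} (hx : 0 < x) (hy : 0 < y) : |x - y| < x + y :=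
  abs_sub_lt_iff.2 ⟨by linarith, by linarith⟩

section Parameters

variable {K lam mu al be al' be' : ℝ}

lemma sub_div_eq_of_eq_mul (hs : lam + mu - 1 ≠ 0)
    (hK : K = (lam + mu - 1) * (al * be - al' * be')) :
    al * be - K / (lam + mu - 1) = al' * be' := by
  rw [hK, mul_div_cancel_left₀ _ hs]
  ring

lemma rK_eq_of_eq_mul (hK : K = (lam + mu - 1) * (al * be - al' * be')) :
    rK K (lam + mu - 1) = (lam + mu - 1) *
      ((lam - mu) ^ 2 + 2 * (lam * mu - al * be) + 2 * ((1 - lam) * (1 - mu) + al' * be')) := by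
  rw [hK, rK]
  ring

lemma sq_sub_lt_rK_div (hK : K = (lam + mu - 1) * (al * be - al' * be')) (hs : 1 < lam + mu)
    (hal : |al| < mu) (hbe : |be| < lam) (hal' : |al'| < 1 - mu) (hbe' : |be'| < 1 - lam) :
    (lam - mu) ^ 2 < rK K (lam + mu - 1) / (lam + mu - 1) := by
  have hab : al * be < lam * mu := calc
    al * be ≤ |al| * |be| := by rw [← abs_mul]; exact le_abs_self _
    _ < mu * lam := mul_lt_mul'' hal hbe (abs_nonneg _) (abs_nonneg _)
    _ = lam * mu := mul_comm _ _
  have hab' : -(al' * be') < (1 - lam) * (1 - mu) := calc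
    -(al' * be') ≤ |al'| * |be'| := by rw [← abs_mul]; exact neg_le_abs _
    _ < (1 - mu) * (1 - lam) := mul_lt_mul'' hal' hbe' (abs_nonneg _) (abs_nonneg _)
    _ = (1 - lam) * (1 - mu) := mul_comm _ _
  rw [rK_eq_of_eq_mul hK, mul_div_cancel_left₀ _ (by linarith)]
  linarith

lemma mem_Theta {ν : ℝ} (hν : rK K ν = 0) (hK : K = (lam + mu - 1) * (al * be - al' * be'))
    (hs : 1 < lam + mu) (hal : |al| < mu) (hbe : |be| < lam) (hal' : |al'| < 1 - mu)
    (hbe' : |be'| < 1 - lam) :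
    (lam, mu) ∈ Theta K ν := by
  have hlam := (abs_nonneg be).trans_lt hbe
  have hlam1 := (abs_nonneg be').trans_lt hbe'
  have hmu := (abs_nonneg al).trans_lt hal
  have hmu1 := (abs_nonneg al').trans_lt hal'
  have hsq := sq_sub_lt_rK_div hK hs hal hbe hal' hbe'
  have hν_lt : ν < lam + mu - 1 := (rK_strictMono K).lt_iff_lt.1 <| by
    rw [hν]
    exact div_pos_iff_of_pos_right (by linarith) |>.1 ((sq_nonneg _).trans_lt hsq)
  refine ⟨⟨hlam, by linarith⟩, ⟨hmu, by linarith⟩, by linarith, by linarith, lt_min ?_ ?_⟩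
  · exact abs_sub_lt_iff.2 ⟨by linarith, by linarith⟩
  · exact Real.lt_sqrt (abs_nonneg _) |>.2 (by rwa [sq_abs])

lemma mem_OmegaLM (hK : K = (lam + mu - 1) * (al * be - al' * be')) (hs : 1 < lam + mu)
    (hal0 : 0 < al) (hal : al < mu) (hbe : |be| < lam) (hal' : |al'| < 1 - mu)
    (hbe' : |be'| < 1 - lam) :
    (al, be) ∈ OmegaLM K lam mu := by
  refine ⟨hal0, hal, hbe, ?_⟩
  rw [sub_div_eq_of_eq_mul (by linarith) hK, abs_mul, mul_comm (1 - lam)]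
  exact mul_lt_mul'' hal' hbe' (abs_nonneg _) (abs_nonneg _)

lemma abs_sub_div_lt_abs (hK : K = (lam + mu - 1) * (al * be - al' * be')) (hs : 1 < lam + mu)
    (hal' : |al'| < 1 - mu) (hbe' : be' ≠ 0) :
    |al * be - K / (lam + mu - 1)| / (1 - mu) < |be'| := by
  rw [sub_div_eq_of_eq_mul (by linarith) hK, abs_mul, div_lt_iff₀ ((abs_nonneg _).trans_lt hal'),
    mul_comm]
  exact mul_lt_mul_of_pos_left hal' (abs_pos.2 hbe')

lemma eq_sub_div_div (hK : K = (lam + mu - 1) * (al * be - al' * be')) (hs : 1 < lam + mu)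
    (hbe' : be' ≠ 0) :
    al' = (al * be - K / (lam + mu - 1)) / be' := by
  rw [sub_div_eq_of_eq_mul (by linarith) hK, mul_div_cancel_right₀ _ hbe']

end Parameters

theorem stmt_18_general (K : ℝ) (ν : ℝ)
    (hν : 0 < ν ∧ rK K ν = 0)
    (a b c d e f g h : ℝ)
    (A : Matrix (Fin 4) (Fin 4) ℝ)
    (hA : A = !![a, b, c, d; e, f, g, h; h, g, f, e; d, c, b, a])
    (hpos : ∀ i j, 0 < A i j)
    (hsum1 : a + b + c + d = 1) (hsum2 : e + f + g + h = 1)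
    (hdet : A.det = K)
    (hdiag : 1 < a + d + g + f) (hbc : b ≠ c) (hfg : g < f)
    (lam mu al al' be be' : ℝ)
    (hlam : lam = a + d) (hmu : mu = f + g) (hal : al = f - g)
    (hal' : al' = h - e) (hbe : be = a - d) (hbe' : be' = c - b) :
    (lam, mu) ∈ Theta K ν ∧ (al, be) ∈ OmegaLM K lam mu ∧
      |al * be - K / (lam + mu - 1)| / (1 - mu) < |be'| ∧ |be'| < 1 - lam ∧
      al' = (al * be - K / (lam + mu - 1)) / be' := by
  subst hA hlam hmu hal hal' hbe hbe'
  have hK := hdet ▸ det_ssm_of_row_sum hsum1 hsum2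
  have hs : 1 < a + d + (f + g) := by linarith
  have hal : |f - g| < f + g := abs_sub_lt_add (hpos 1 1) (hpos 1 2)
  have hbe : |a - d| < a + d := abs_sub_lt_add (hpos 0 0) (hpos 0 3)
  have hal' : |h - e| < 1 - (f + g) := by
    rw [show 1 - (f + g) = h + e by linarith]
    exact abs_sub_lt_add (hpos 1 3) (hpos 1 0)
  have hbe' : |c - b| < 1 - (a + d) := by
    rw [show 1 - (a + d) = c + b by linarith]
    exact abs_sub_lt_add (hpos 0 2) (hpos 0 1)
  have hbc' : c - b ≠ 0 := sub_ne_zero.2 hbc.symm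
  exact ⟨mem_Theta hν.2 hK hs hal hbe hal' hbe',
    mem_OmegaLM hK hs (sub_pos.2 hfg) (abs_lt.1 hal).2 hbe hal' hbe',
    abs_sub_div_lt_abs hK hs hal' hbc', hbe', eq_sub_div_div hK hs hbc'⟩

theorem stmt_18 (K : ℝ) (hK0 : 0 < K) (hK1 : K < 1) (ν : ℝ)
    (hν : 0 < ν ∧ rK K ν = 0)
    (hνu : ∀ t : ℝ, 0 < t → rK K t = 0 → t = ν)
    (a b c d e f g h : ℝ)
    (A : Matrix (Fin 4) (Fin 4) ℝ)
    (hA : A = !![a, b, c, d; e, f, g, h; h, g, f, e; d, c, b, a])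
    (hpos : ∀ i j, 0 < A i j)
    (hsum1 : a + b + c + d = 1) (hsum2 : e + f + g + h = 1)
    (hdet : A.det = K)
    (hdiag : 1 < a + d + g + f) (hbc : b ≠ c) (hfg : g < f)
    (lam mu al al' be be' : ℝ)
    (hlam : lam = a + d) (hmu : mu = f + g) (hal : al = f - g)
    (hal' : al' = h - e) (hbe : be = a - d) (hbe' : be' = c - b) :
    (lam, mu) ∈ Theta K ν ∧ (al, be) ∈ OmegaLM K lam mu ∧
      |al * be - K / (lam + mu - 1)| / (1 - mu) < |be'| ∧ |be'| < 1 - lam ∧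
      al' = (al * be - K / (lam + mu - 1)) / be' :=
  stmt_18_general K ν hν a b c d e f g h A hA hpos hsum1 hsum2 hdet hdiag hbc hfg lam mu al al' be
    be' hlam hmu hal hal' hbe hbe'
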